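/- arXiv:math/0203017 — 2 statements merged into one kernel-verified Lean document; each statement's English description precedes it below -/
import Mathlib

section
/- Let a > 0 and let x = (x₁, x₂) and y = (y₁, y₂) be points of the Euclidean plane ℝ² with y₁ − x₁ ≥ 2a, x₂ ∈ [0, 1], and y₂ ∈ [0, 1]. Then every point z = (z₁, z₂) with z₂ ∈ [0, 1] lying on the line of symmetry of x and y (i.e., with dist(z, x) = dist(z, y)) satisfies |z₁ − (x₁ + y₁)/2| ≤ 1/(4a). -/
/-- If `y₁ - x₁ ≥ 2a` and `x₂, y₂ ∈ [0,1]`, then every point `z` with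
`z₂ ∈ [0,1]` on the line of symmetry of `x` and `y` satisfies
`|z₁ - (x₁+y₁)/2| ≤ 1/(4a)`. -/
theorem mirror_deviation_in_strip_bound
    (a : ℝ) (ha : 0 < a) (x y z : EuclideanSpace ℝ (Fin 2))
    (hsep : y 0 - x 0 ≥ 2 * a)
    (hx2 : x 1 ∈ Set.Icc (0:ℝ) 1) (hy2 : y 1 ∈ Set.Icc (0:ℝ) 1)
    (hz2 : z 1 ∈ Set.Icc (0:ℝ) 1)
    (hz : dist z x = dist z y) :
    |z 0 - (x 0 + y 0) / 2| ≤ 1 / (4 * a) := by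
  obtain ⟨hx2a, hx2b⟩ := hx2
  obtain ⟨hy2a, hy2b⟩ := hy2
  obtain ⟨hz2a, hz2b⟩ := hz2
  have hdx := EuclideanSpace.dist_eq z x
  have hdy := EuclideanSpace.dist_eq z y
  rw [Fin.sum_univ_two] at hdx hdy
  have h : (z 0 - x 0)^2 + (z 1 - x 1)^2 = (z 0 - y 0)^2 + (z 1 - y 1)^2 := by
    have h2 : dist z x ^ 2 = dist z y ^ 2 := by rw [hz]
    rw [hdx, hdy, Real.sq_sqrt (by positivity), Real.sq_sqrt (by positivity)] at h2
    simpa [Real.dist_eq, sq_abs] using h2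
  have key : (z 0 - (x 0 + y 0) / 2) * (2 * (y 0 - x 0))
      = (z 1 - y 1)^2 - (z 1 - x 1)^2 := by linear_combination h
  have hN : |(z 1 - y 1)^2 - (z 1 - x 1)^2| ≤ 1 := by
    rw [abs_le]; constructor <;> nlinarith
  rw [le_div_iff₀ (by positivity)]
  calc |z 0 - (x 0 + y 0) / 2| * (4 * a)
      ≤ |z 0 - (x 0 + y 0) / 2| * (2 * (y 0 - x 0)) := by
        apply mul_le_mul_of_nonneg_left (by linarith) (abs_nonneg _)
    _ = |(z 0 - (x 0 + y 0) / 2) * (2 * (y 0 - x 0))| := by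
        rw [abs_mul, abs_of_nonneg (show (0:ℝ) ≤ 2 * (y 0 - x 0) by linarith)]
    _ = |(z 1 - y 1)^2 - (z 1 - x 1)^2| := by rw [key]
    _ ≤ 1 := hN
end

section
/- Let a > 1/2 and 0 < b < a − 1/(4a). Let x = (x₁, x₂) and y = (y₁, y₂) be points of the Euclidean plane ℝ² with −a − b ≤ x₁ ≤ −a, a ≤ y₁ ≤ a + b, x₂ ∈ [0, 1], and y₂ ∈ [0, 1]. Then every point z = (z₁, z₂) with z₂ ∈ [0, 1] lying on the line of symmetry of x and y (i.e., with dist(z, x) = dist(z, y)) satisfies −b − 1/(4a) ≤ z₁ ≤ b + 1/(4a). -/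
/-- Example 2 claim: if `x` lies in the left strip and `y` in the right strip
of the domain, then every point `z` with `z₂ ∈ [0,1]` on the line of symmetry
of `x` and `y` satisfies `-b - 1/(4a) ≤ z₁ ≤ b + 1/(4a)`. -/
theorem mirror_line_meets_domain_within_A
    (a b : ℝ) (ha : 1 / 2 < a) (hb0 : 0 < b) (hb : b < a - 1 / (4 * a))
    (x y z : EuclideanSpace ℝ (Fin 2))
    (hx1 : -a - b ≤ x 0) (hx1' : x 0 ≤ -a)
    (hy1 : a ≤ y 0) (hy1' : y 0 ≤ a + b)
    (hx2 : x 1 ∈ Set.Icc (0:ℝ) 1) (hy2 : y 1 ∈ Set.Icc (0:ℝ) 1)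
    (hz2 : z 1 ∈ Set.Icc (0:ℝ) 1)
    (hz : dist z x = dist z y) :
    -b - 1 / (4 * a) ≤ z 0 ∧ z 0 ≤ b + 1 / (4 * a) := by
  have ha0 : (0:ℝ) < a := by linarith
  have h4a : (0:ℝ) < 4 * a := by linarith
  have hinv : (4 * a) * (1 / (4 * a)) = 1 := by field_simp
  have hinv0 : 0 < 1 / (4 * a) := by positivity
  obtain ⟨hx20, hx21⟩ := hx2
  obtain ⟨hy20, hy21⟩ := hy2
  obtain ⟨hz20, hz21⟩ := hz2
  have key : (z 0 - x 0)^2 + (z 1 - x 1)^2 = (z 0 - y 0)^2 + (z 1 - y 1)^2 := by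
    have h := congrArg (· ^ 2) hz
    simp only [EuclideanSpace.dist_eq, Real.dist_eq] at h
    rw [Real.sq_sqrt (by positivity), Real.sq_sqrt (by positivity)] at h
    simpa [Fin.sum_univ_two, sq_abs] using h
  have hE : (y 0 - x 0) * (2 * z 0 - x 0 - y 0)
      = (z 1 - y 1)^2 - (z 1 - x 1)^2 := by linear_combination key
  have hD1 : (z 1 - y 1)^2 - (z 1 - x 1)^2 ≤ 1 := by nlinarith
  have hD2 : -1 ≤ (z 1 - y 1)^2 - (z 1 - x 1)^2 := by nlinarith
  have hba : b < 2 * a := by linarith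
  have hgap : 2 * a ≤ y 0 - x 0 := by linarith
  constructor
  · rcases le_or_gt 0 (z 0) with h | h
    · linarith
    · -- z 0 < 0 : bound -z0
      nlinarith [mul_nonneg (le_of_lt (neg_pos.mpr h)) (by linarith : (0:ℝ) ≤ y 0 - x 0 - 2*a),
        mul_pos hb0 hb0]
  · rcases le_or_gt (z 0) 0 with h | h
    · linarith
    · nlinarith [mul_nonneg (le_of_lt h) (by linarith : (0:ℝ) ≤ y 0 - x 0 - 2*a),
        mul_pos hb0 hb0]
end
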